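/- Suppose μ_0 is absolutely continuous with respect to Lebesgue measure on [0,1), with Radon–Nikodym derivative f. Then f is essentially unbounded on every nonempty open subset of [0,1): for every nonempty open V ⊆ [0,1) and every constant C > 0, the set {x ∈ V : f(x) > C} has positive Lebesgue measure. -/

import Mathlib

open Real Matrix MeasureTheory
open scoped ENNReal

/-!
The first row of both `F 0` and `F 1` is a multiple of `e₀ᵀ`, so the first coordinate of
`F_{i_k} ⋯ F_{i_1} e₀` is the product of the corresponding diagonal entries `a₀` or `a₃`, and
`μ₀` of a dyadic interval is at least the square of that product, nonzero since `a₀, a₃ > 0`.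
Appending `k` zero digits to a word multiplies the length of its interval by `2⁻ᵏ` but this
lower bound on its mass by `a₀²ᵏ`, and `a₀² > 1/2` when `|β| < π/4`. Hence every dyadic interval
contains intervals of arbitrarily large `μ₀`-to-length ratio, which a density bounded by `C`
a.e. on an open set would forbid.
-/

/-- The dyadic rational `ξ = i₁/2 + ⋯ + i_k/2^k` associated with digits `i : Fin k → Fin 2`. -/
noncomputable def dyadicVal {k : ℕ} (i : Fin k → Fin 2) : ℝ :=
  ∑ j : Fin k, ((i j : ℕ) : ℝ) * (2⁻¹ : ℝ) ^ ((j : ℕ) + 1)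

/-- The matrix word `F_{i_k} ⋯ F_{i_1}` (rightmost factor applied first). -/
noncomputable def matWordR {N : ℕ} (F : Fin N → Matrix (Fin 3) (Fin 3) ℝ) {k : ℕ}
    (i : Fin k → Fin N) : Matrix (Fin 3) (Fin 3) ℝ :=
  ((List.ofFn i).reverse.map F).prod

theorem Matrix.list_prod_mulVec_apply_of_row_eq_single {n R : Type*} [Fintype n] [DecidableEq n]
    [CommRing R] {p : n} (L : List (Matrix n n R)) (hL : ∀ A ∈ L, ∀ j ≠ p, A p j = 0)
    (v : n → R) : (L.prod *ᵥ v) p = (L.map (· p p)).prod * v p := by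
  induction L with
  | nil => simp
  | cons A L ih =>
    have hrow : ∀ w : n → R, (A *ᵥ w) p = A p p * w p := fun w =>
      Finset.sum_eq_single p (fun j _ hj => by simp [hL A (by simp) j hj]) (by simp)
    rw [List.prod_cons, ← mulVec_mulVec, hrow, ih fun B hB => hL B (List.mem_cons_of_mem A hB),
      List.map_cons, List.prod_cons, mul_assoc]

theorem matWordR_mulVec_apply_zero {N k : ℕ} (F : Fin N → Matrix (Fin 3) (Fin 3) ℝ)
    (hF : ∀ d, ∀ j ≠ 0, F d 0 j = 0) (i : Fin k → Fin N) (v : Fin 3 → ℝ) :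
    (matWordR F i *ᵥ v) 0 = (∏ j, F (i j) 0 0) * v 0 := by
  rw [matWordR, list_prod_mulVec_apply_of_row_eq_single _ (by simpa using fun a => hF (i a))]
  simp [List.map_reverse, List.prod_reverse, List.prod_ofFn]

theorem dyadicVal_snoc {k : ℕ} (i : Fin k → Fin 2) (d : Fin 2) :
    dyadicVal (Fin.snoc i d) = dyadicVal i + ((d : ℕ) : ℝ) * 2⁻¹ ^ (k + 1) := by
  simp [dyadicVal, Fin.sum_univ_castSucc]

theorem dyadicVal_append_zero {m k : ℕ} (i : Fin m → Fin 2) :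
    dyadicVal (Fin.append i fun _ : Fin k => 0) = dyadicVal i := by
  simp [dyadicVal, Fin.sum_univ_add]

theorem dyadicVal_nonneg {k : ℕ} (i : Fin k → Fin 2) : 0 ≤ dyadicVal i := by
  unfold dyadicVal
  positivity

theorem dyadicVal_add_le_one {k : ℕ} (i : Fin k → Fin 2) : dyadicVal i + 2⁻¹ ^ k ≤ 1 := by
  induction k with
  | zero => simp [dyadicVal]
  | succ k ih =>
    rw [← Fin.snoc_init_self i, dyadicVal_snoc]
    have hd : ((i (Fin.last k) : ℕ) : ℝ) ≤ 1 := by exact_mod_cast Nat.lt_succ_iff.mp (i _).isLt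
    have := ih (Fin.init i)
    rw [pow_succ]
    nlinarith [pow_pos (by norm_num : (0 : ℝ) < 2⁻¹) k]

theorem exists_dyadicVal_mem_Ico {x : ℝ} (hx : x ∈ Set.Ico (0 : ℝ) 1) (m : ℕ) :
    ∃ i : Fin m → Fin 2, x ∈ Set.Ico (dyadicVal i) (dyadicVal i + 2⁻¹ ^ m) := by
  induction m with
  | zero => exact ⟨![], by simpa [dyadicVal] using hx⟩
  | succ m ih =>
    obtain ⟨i, hlo, hhi⟩ := ih
    have hhalf : (2⁻¹ : ℝ) ^ m = 2⁻¹ ^ (m + 1) + 2⁻¹ ^ (m + 1) := by ring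
    by_cases hleft : x < dyadicVal i + 2⁻¹ ^ (m + 1)
    · refine ⟨Fin.snoc i 0, ?_⟩
      norm_num only [dyadicVal_snoc, Set.mem_Ico, Fin.val_zero]
      constructor <;> linarith
    · refine ⟨Fin.snoc i 1, ?_⟩
      norm_num only [dyadicVal_snoc, Set.mem_Ico, Fin.val_one]
      constructor <;> linarith

theorem exists_dyadic_Ico_subset {U : Set ℝ} (hU : IsOpen U) {x : ℝ}
    (hx : x ∈ U ∩ Set.Ico (0 : ℝ) 1) : ∃ (m : ℕ) (i : Fin m → Fin 2),
      Set.Ico (dyadicVal i) (dyadicVal i + 2⁻¹ ^ m) ⊆ U ∩ Set.Ico (0 : ℝ) 1 := by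
  obtain ⟨ε, hε, hball⟩ := Metric.isOpen_iff.mp hU x hx.1
  obtain ⟨m, hm⟩ := exists_pow_lt_of_lt_one hε (by norm_num : (2⁻¹ : ℝ) < 1)
  obtain ⟨i, hlo, hhi⟩ := exists_dyadicVal_mem_Ico hx.2 m
  refine ⟨m, i, fun y ⟨hy₁, hy₂⟩ => ⟨hball ?_, (dyadicVal_nonneg i).trans hy₁, ?_⟩⟩
  · rw [Metric.mem_ball, Real.dist_eq, abs_lt]
    constructor <;> linarith
  · linarith [dyadicVal_add_le_one i]

theorem MeasureTheory.withDensity_apply_le_mul_of_measure_setOf_lt_eq_zero {α : Type*}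
    [MeasurableSpace α] {ν : Measure α} {f : α → ℝ≥0∞} {c : ℝ≥0∞} {S I : Set α}
    (hI : MeasurableSet I) (hIS : I ⊆ S) (hS : ν {x ∈ S | c < f x} = 0) :
    ν.withDensity f I ≤ c * ν I := by
  rw [withDensity_apply _ hI, ← setLIntegral_const]
  refine setLIntegral_mono_ae' hI (measure_mono_null (fun x hx => ?_) hS)
  have hx' : x ∈ I ∧ c < f x := by simpa using hx
  exact ⟨hIS hx'.1, hx'.2⟩

theorem exists_mul_pow_lt_mul_pow {r s c : ℝ} (hr : 0 < r) (hrs : r < s) (hc : 0 < c) (C : ℝ) :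
    ∃ k : ℕ, C * r ^ k < c * s ^ k := by
  obtain ⟨k, hk⟩ := pow_unbounded_of_one_lt (C / c) ((one_lt_div hr).mpr hrs)
  refine ⟨k, ?_⟩
  rw [div_pow, lt_div_iff₀ (by positivity), div_mul_eq_mul_div, div_lt_iff₀ hc] at hk
  linarith

theorem one_lt_sqrt_two_mul_cos {β : ℝ} (hβ : |β| < π / 4) : 1 < √2 * cos β := by
  have h := cos_lt_cos_of_nonneg_of_le_pi (abs_nonneg β) (by linarith [pi_pos]) hβ
  rw [cos_pi_div_four, cos_abs] at h
  nlinarith [sq_sqrt (show (0 : ℝ) ≤ 2 by norm_num),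
    mul_lt_mul_of_pos_left h (sqrt_pos.mpr two_pos)]

theorem sqrt_two_mul_sin_lt_one {β : ℝ} (hβ : |β| < π / 4) : √2 * sin β < 1 := by
  obtain ⟨hlo, hhi⟩ := abs_lt.mp hβ
  have h := sin_lt_sin_of_lt_of_le_pi_div_two (by linarith) (by linarith [pi_pos]) hhi
  rw [sin_pi_div_four] at h
  nlinarith [sq_sqrt (show (0 : ℝ) ≤ 2 by norm_num), sqrt_nonneg 2]

theorem sq_prod_le_sum_sq_matWordR_mulVec {N k : ℕ} (F : Fin N → Matrix (Fin 3) (Fin 3) ℝ)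
    (hF : ∀ d, ∀ j ≠ 0, F d 0 j = 0) (i : Fin k → Fin N) :
    (∏ j, F (i j) 0 0) ^ 2 ≤ ∑ n, ((matWordR F i *ᵥ ![1, 0, 0]) n) ^ 2 :=
  calc (∏ j, F (i j) 0 0) ^ 2 = ((matWordR F i *ᵥ ![1, 0, 0]) 0) ^ 2 := by
        simp [matWordR_mulVec_apply_zero F hF]
    _ ≤ _ := Finset.single_le_sum (fun n _ => sq_nonneg _) (Finset.mem_univ 0)

theorem exists_Ico_subset_mul_volume_lt {μ : Measure ℝ} (r : Fin 2 → ℝ) (hr : ∀ d, r d ≠ 0)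
    (hr₀ : 2⁻¹ < r 0 ^ 2)
    (hμ : ∀ (k : ℕ) (i : Fin k → Fin 2), ENNReal.ofReal ((∏ j, r (i j)) ^ 2) ≤
      μ (Set.Ico (dyadicVal i) (dyadicVal i + 2⁻¹ ^ k)))
    {m : ℕ} (i : Fin m → Fin 2) {C : ℝ} (hC : 0 ≤ C) :
    ∃ a b : ℝ, Set.Ico a b ⊆ Set.Ico (dyadicVal i) (dyadicVal i + 2⁻¹ ^ m) ∧
      ENNReal.ofReal C * volume (Set.Ico a b) < μ (Set.Ico a b) := by
  set c := ∏ j, r (i j)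
  have hc₀ : c ≠ 0 := Finset.prod_ne_zero_iff.mpr fun j _ => hr (i j)
  have hc : 0 < c ^ 2 := by positivity
  obtain ⟨k, hk⟩ := exists_mul_pow_lt_mul_pow (by norm_num) hr₀ hc (C * 2⁻¹ ^ m)
  set w : Fin (m + k) → Fin 2 := Fin.append i fun _ => 0
  have hw : ∏ j, r (w j) = c * r 0 ^ k := by simp [w, c, Fin.prod_univ_add]
  refine ⟨dyadicVal w, dyadicVal w + 2⁻¹ ^ (m + k), ?_, ?_⟩
  · rw [dyadicVal_append_zero]
    exact Set.Ico_subset_Ico_right <| (add_le_add_iff_left _).mpr <|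
      pow_le_pow_of_le_one (a := (2⁻¹ : ℝ)) (by norm_num) (by norm_num) (m.le_add_right k)
  · refine lt_of_lt_of_le ?_ (hμ _ w)
    rw [Real.volume_Ico, add_sub_cancel_left, ← ENNReal.ofReal_mul hC,
      ENNReal.ofReal_lt_ofReal_iff_of_nonneg (by positivity), hw, pow_add, ← mul_assoc]
    calc C * 2⁻¹ ^ m * 2⁻¹ ^ k < c ^ 2 * (r 0 ^ 2) ^ k := hk
      _ = (c * r 0 ^ k) ^ 2 := by ring

theorem cuntz_wavelet_stmt15_general (β : ℝ) (hβ : |β| < π / 4)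
    (a₀ a₁ a₂ a₃ : ℝ)
    (h₀ : a₀ = (1 + Real.sqrt 2 * Real.cos β) / (2 * Real.sqrt 2))
    (h₃ : a₃ = (1 - Real.sqrt 2 * Real.sin β) / (2 * Real.sqrt 2))
    (F : Fin 2 → Matrix (Fin 3) (Fin 3) ℝ)
    (hF₀ : F 0 = !![a₀, 0, 0; a₂, a₁, a₀; 0, a₃, a₂])
    (hF₁ : F 1 = !![a₃, 0, 0; a₁, -a₂, a₃; 0, -a₀, a₁])
    (e₀ : Fin 3 → ℝ) (he₀ : e₀ = ![1, 0, 0])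
    (μ₀ : Measure ℝ)
    (hμ₀ : ∀ (k : ℕ) (i : Fin k → Fin 2),
      μ₀ (Set.Ico (dyadicVal i) (dyadicVal i + (2⁻¹ : ℝ) ^ k)) =
        ENNReal.ofReal (∑ n, ((matWordR F i).mulVec e₀ n) ^ 2))
    (f : ℝ → ℝ≥0∞)
    (hac : μ₀ = MeasureTheory.Measure.withDensity volume f) :
    ∀ U : Set ℝ, IsOpen U → (U ∩ Set.Ico (0 : ℝ) 1).Nonempty →
      ∀ C : ℝ, 0 < C →
        0 < volume { x ∈ U ∩ Set.Ico (0 : ℝ) 1 | ENNReal.ofReal C < f x } := by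
  intro U hU ⟨x, hx⟩ C hC
  have hrow : ∀ d, ∀ j ≠ 0, F d 0 j = 0 := by
    intro d j hj
    fin_cases d <;> fin_cases j <;> simp_all
  have ha₀ : 0 < a₀ := h₀ ▸ div_pos (by linarith [one_lt_sqrt_two_mul_cos hβ]) (by positivity)
  have ha₃ : 0 < a₃ := h₃ ▸ div_pos (by linarith [sqrt_two_mul_sin_lt_one hβ]) (by positivity)
  have hdiag_ne : ∀ d, F d 0 0 ≠ 0 := by
    intro d
    fin_cases d <;> simp [hF₀, hF₁, ha₀.ne', ha₃.ne']
  have ha₀_sq : 2⁻¹ < F 0 0 0 ^ 2 := by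
    have := one_lt_sqrt_two_mul_cos hβ
    have hF₀₀ : F 0 0 0 = a₀ := by simp [hF₀]
    rw [hF₀₀, h₀, div_pow, mul_pow, sq_sqrt zero_le_two, lt_div_iff₀ (by norm_num)]
    nlinarith
  have hmass : ∀ (k : ℕ) (i : Fin k → Fin 2), ENNReal.ofReal ((∏ j, F (i j) 0 0) ^ 2) ≤
      μ₀ (Set.Ico (dyadicVal i) (dyadicVal i + 2⁻¹ ^ k)) := fun k i =>
    hμ₀ k i ▸ he₀ ▸ ENNReal.ofReal_le_ofReal (sq_prod_le_sum_sq_matWordR_mulVec F hrow i)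
  obtain ⟨m, i, hI⟩ := exists_dyadic_Ico_subset hU hx
  obtain ⟨a, b, hab, hlt⟩ :=
    exists_Ico_subset_mul_volume_lt (fun d => F d 0 0) hdiag_ne ha₀_sq hmass i hC.le
  refine pos_iff_ne_zero.mpr fun hnull => hlt.not_ge ?_
  exact hac ▸
    withDensity_apply_le_mul_of_measure_setOf_lt_eq_zero measurableSet_Ico (hab.trans hI) hnull

/-- For `|β| < π/4`, if the Coifman–Meyer–Wickerhauser measure `μ₀`
is absolutely continuous with respect to Lebesgue measure with Radon–Nikodym
derivative `f`, then `f` is essentially unbounded on every nonempty open subset `V`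
of `[0,1)`: for every `C > 0` the set `{x ∈ V : f x > C}` has positive Lebesgue
measure. -/
theorem cuntz_wavelet_stmt15 (β : ℝ) (hβ : |β| < π / 4)
    (a₀ a₁ a₂ a₃ : ℝ)
    (h₀ : a₀ = (1 + Real.sqrt 2 * Real.cos β) / (2 * Real.sqrt 2))
    (h₁ : a₁ = (1 + Real.sqrt 2 * Real.sin β) / (2 * Real.sqrt 2))
    (h₂ : a₂ = (1 - Real.sqrt 2 * Real.cos β) / (2 * Real.sqrt 2))
    (h₃ : a₃ = (1 - Real.sqrt 2 * Real.sin β) / (2 * Real.sqrt 2))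
    (F : Fin 2 → Matrix (Fin 3) (Fin 3) ℝ)
    (hF₀ : F 0 = !![a₀, 0, 0; a₂, a₁, a₀; 0, a₃, a₂])
    (hF₁ : F 1 = !![a₃, 0, 0; a₁, -a₂, a₃; 0, -a₀, a₁])
    (e₀ : Fin 3 → ℝ) (he₀ : e₀ = ![1, 0, 0])
    (μ₀ : Measure ℝ)
    (hμ₀ : ∀ (k : ℕ) (i : Fin k → Fin 2),
      μ₀ (Set.Ico (dyadicVal i) (dyadicVal i + (2⁻¹ : ℝ) ^ k)) =
        ENNReal.ofReal (∑ n, ((matWordR F i).mulVec e₀ n) ^ 2))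
    (f : ℝ → ℝ≥0∞)
    (hac : μ₀ = MeasureTheory.Measure.withDensity volume f) :
    ∀ U : Set ℝ, IsOpen U → (U ∩ Set.Ico (0 : ℝ) 1).Nonempty →
      ∀ C : ℝ, 0 < C →
        0 < volume { x ∈ U ∩ Set.Ico (0 : ℝ) 1 | ENNReal.ofReal C < f x } :=
  cuntz_wavelet_stmt15_general β hβ a₀ a₁ a₂ a₃ h₀ h₃ F hF₀ hF₁ e₀ he₀ μ₀ hμ₀ f hac
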